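/- arXiv:2209.05126 — 5 statements merged into one kernel-verified Lean document; each statement's English description precedes it below -/
import Mathlib

section
/- For real numbers a, b with 0 ≤ a, b ≤ 1 and natural numbers x, it holds that |a^x · b^x · (a − b)| ≤ |a^(2x+1) − b^(2x+1)|. -/
lemma aux_pow_sub (a b : ℝ) (x : ℕ) (hb0 : 0 ≤ b) (hab : b ≤ a) :
    a ^ x * b ^ x * (a - b) ≤ a ^ (2 * x + 1) - b ^ (2 * x + 1) := by
  have ha0 : 0 ≤ a := hb0.trans hab
  have key := geom_sum₂_mul a b (2 * x + 1)
  rw [← key]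
  have hsum : a ^ x * b ^ x ≤ ∑ i ∈ Finset.range (2 * x + 1), a ^ i * b ^ (2 * x + 1 - 1 - i) := by
    have hx : x ∈ Finset.range (2 * x + 1) := by
      simp; omega
    have h := Finset.single_le_sum (f := fun i => a ^ i * b ^ (2 * x + 1 - 1 - i))
      (fun i _ => mul_nonneg (pow_nonneg ha0 _) (pow_nonneg hb0 _)) hx
    have hxx : 2 * x - x = x := by omega
    simpa [hxx] using h
  exact mul_le_mul_of_nonneg_right hsum (by linarith)

theorem abs_pow_mul_pow_mul_sub_le (a b : ℝ) (x : ℕ)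
    (ha0 : 0 ≤ a) (ha1 : a ≤ 1) (hb0 : 0 ≤ b) (hb1 : b ≤ 1) :
    |a ^ x * b ^ x * (a - b)| ≤ |a ^ (2 * x + 1) - b ^ (2 * x + 1)| := by
  rcases le_total b a with hab | hab
  · have h1 : a ^ x * b ^ x * (a - b) ≤ a ^ (2 * x + 1) - b ^ (2 * x + 1) :=
      aux_pow_sub a b x hb0 hab
    have h2 : 0 ≤ a ^ x * b ^ x * (a - b) :=
      mul_nonneg (mul_nonneg (pow_nonneg ha0 _) (pow_nonneg hb0 _)) (by linarith)
    rw [abs_of_nonneg h2, abs_of_nonneg (h2.trans h1)]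
    exact h1
  · have h1 : b ^ x * a ^ x * (b - a) ≤ b ^ (2 * x + 1) - a ^ (2 * x + 1) :=
      aux_pow_sub b a x ha0 hab
    have h2 : 0 ≤ b ^ x * a ^ x * (b - a) :=
      mul_nonneg (mul_nonneg (pow_nonneg hb0 _) (pow_nonneg ha0 _)) (by linarith)
    rw [show a ^ x * b ^ x * (a - b) = -(b ^ x * a ^ x * (b - a)) by ring,
      show a ^ (2 * x + 1) - b ^ (2 * x + 1) = -(b ^ (2 * x + 1) - a ^ (2 * x + 1)) by ring,
      abs_neg, abs_neg, abs_of_nonneg h2, abs_of_nonneg (h2.trans h1)]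
    exact h1
end

section
/- Let ς_V, ς_P ∈ [0,1] and let l be an odd natural number, l = r + s with r > s. Then ς_V^⌊l/2⌋ · ς_P^⌊l/2⌋ · (ς_V + ς_P) ≤ ς_V^s · ς_P^s · (ς_V^(r−s) + ς_P^(r−s)). -/
lemma key_aux (a b : ℝ) (k : ℕ) (ha : 0 ≤ a) (hb : 0 ≤ b) :
    a ^ k * b ^ k * (a + b) ≤ a ^ (2 * k + 1) + b ^ (2 * k + 1) := by
  have h : 0 ≤ (a ^ (k+1) - b ^ (k+1)) * (a ^ k - b ^ k) := by
    rcases le_total a b with h | h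
    · have h1 : a ^ (k+1) ≤ b ^ (k+1) := pow_le_pow_left₀ ha h _
      have h2 : a ^ k ≤ b ^ k := pow_le_pow_left₀ ha h _
      nlinarith
    · have h1 : b ^ (k+1) ≤ a ^ (k+1) := pow_le_pow_left₀ hb h _
      have h2 : b ^ k ≤ a ^ k := pow_le_pow_left₀ hb h _
      nlinarith
  calc a ^ k * b ^ k * (a + b)
      = a ^ (k+1) * b ^ k + b ^ (k+1) * a ^ k := by ring
    _ ≤ a ^ (k+1) * a ^ k + b ^ (k+1) * b ^ k := by nlinarith [h]
    _ = a ^ (2 * k + 1) + b ^ (2 * k + 1) := by ring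

theorem odd_level_balanced_min (ςP ςV : ℝ) (l r s : ℕ)
    (hP0 : 0 ≤ ςP) (hP1 : ςP ≤ 1) (hV0 : 0 ≤ ςV) (hV1 : ςV ≤ 1)
    (hodd : Odd l) (hl : l = r + s) (hrs : s < r) :
    ςV ^ (l / 2) * ςP ^ (l / 2) * (ςV + ςP) ≤
      ςV ^ s * ςP ^ s * (ςV ^ (r - s) + ςP ^ (r - s)) := by
  -- r - s is odd
  have hd : Odd (r - s) := by
    rcases hodd with ⟨m, hm⟩
    refine ⟨m - s, ?_⟩
    omega
  obtain ⟨k, hk⟩ := hd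
  have hl2 : l / 2 = s + k := by omega
  have hrs' : r - s = 2 * k + 1 := hk
  rw [hl2, hrs']
  have key := key_aux ςV ςP k hV0 hP0
  have hVk : 0 ≤ ςV ^ k := pow_nonneg hV0 k
  have hPk : 0 ≤ ςP ^ k := pow_nonneg hP0 k
  have hVs : 0 ≤ ςV ^ s := pow_nonneg hV0 s
  have hPs : 0 ≤ ςP ^ s := pow_nonneg hP0 s
  calc ςV ^ (s + k) * ςP ^ (s + k) * (ςV + ςP)
      = ςV ^ s * ςP ^ s * (ςV ^ k * ςP ^ k * (ςV + ςP)) := by ring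
    _ ≤ ςV ^ s * ςP ^ s * (ςV ^ (2*k+1) + ςP ^ (2*k+1)) := by
        apply mul_le_mul_of_nonneg_left key (by positivity)
end

section
/- Define the cost C(o, h, φ, ς_P, ς_V) = 1 + Σ_{l=1}^{h} Π_{i=1}^{l} (o · ς_{φ_i}), where φ is a vector of length h with entries in {P, V}, ς_P, ς_V ∈ [0,1], and o ≥ 0. Let φ_DY be the perfectly alternating vector (V, P, V, P, …) of length h. Then for every vector φ of length h, C(o, h, φ_DY, ς_P, ς_V) + C(o, h, φ_DY, ς_V, ς_P) ≤ C(o, h, φ, ς_P, ς_V) + C(o, h, φ, ς_V, ς_P). -/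
/-- Cost of a search in a complete tree of height `h` and fanout `o`, where level `i`
partitions in the value dimension if `φ i = true` (selectivity `v`) and in the path
dimension otherwise (selectivity `p`). -/
noncomputable def cost (o : ℝ) (h : ℕ) (φ : ℕ → Bool) (p v : ℝ) : ℝ :=
  1 + ∑ l ∈ Finset.Icc 1 h, ∏ i ∈ Finset.Icc 1 l, (o * (if φ i then v else p))

/-- The perfectly alternating vector (V, P, V, P, …): value dimension at odd levels. -/
def φDY : ℕ → Bool := fun i => i % 2 = 1

lemma key_prod (p v : ℝ) (hp : 0 ≤ p) (hv : 0 ≤ v) (a b : ℕ) :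
    0 ≤ (p ^ a - v ^ a) * (p ^ b - v ^ b) := by
  rcases le_total p v with h | h
  · have h1 : p ^ a ≤ v ^ a := pow_le_pow_left₀ hp h a
    have h2 : p ^ b ≤ v ^ b := pow_le_pow_left₀ hp h b
    nlinarith
  · have h1 : v ^ a ≤ p ^ a := pow_le_pow_left₀ hv h a
    have h2 : v ^ b ≤ p ^ b := pow_le_pow_left₀ hv h b
    nlinarith

lemma sym_aux (p v : ℝ) (hp : 0 ≤ p) (hv : 0 ≤ v) (n k d : ℕ) :
    p ^ (n + k + d) * v ^ (n + k) + p ^ (n + k) * v ^ (n + k + d) ≤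
    p ^ (n + 2 * k + d) * v ^ n + p ^ n * v ^ (n + 2 * k + d) := by
  have key := key_prod p v hp hv (k + d) k
  have hnn : 0 ≤ p ^ n * v ^ n := mul_nonneg (pow_nonneg hp n) (pow_nonneg hv n)
  have expand :
      p ^ (n + 2 * k + d) * v ^ n + p ^ n * v ^ (n + 2 * k + d) -
        (p ^ (n + k + d) * v ^ (n + k) + p ^ (n + k) * v ^ (n + k + d)) =
      p ^ n * v ^ n * ((p ^ (k + d) - v ^ (k + d)) * (p ^ k - v ^ k)) := by
    simp only [pow_add, two_mul]
    ring
  nlinarith [mul_nonneg hnn key]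

lemma sym_min (p v : ℝ) (hp : 0 ≤ p) (hv : 0 ≤ v) (m n : ℕ) :
    p ^ (m + n - (m + n) / 2) * v ^ ((m + n) / 2) +
      p ^ ((m + n) / 2) * v ^ (m + n - (m + n) / 2) ≤
    p ^ m * v ^ n + p ^ n * v ^ m := by
  rcases le_total n m with hnm | hmn
  · obtain ⟨k, d, h1, h2, h3, h4⟩ :
        ∃ k d, (m + n) / 2 = n + k ∧ m + n - (m + n) / 2 = n + k + d ∧
          m = n + 2 * k + d ∧ n = n := ⟨(m + n) / 2 - n, (m + n) % 2, by omega, by omega,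
            by omega, rfl⟩
    rw [h2, h1, h3]
    exact sym_aux p v hp hv n k d
  · obtain ⟨k, d, h1, h2, h3⟩ :
        ∃ k d, (m + n) / 2 = m + k ∧ m + n - (m + n) / 2 = m + k + d ∧
          n = m + 2 * k + d := ⟨(m + n) / 2 - m, (m + n) % 2, by omega, by omega, by omega⟩
    rw [h2, h1, h3]
    have := sym_aux p v hp hv m k d
    linarith

lemma prod_eval (o p v : ℝ) (φ : ℕ → Bool) (l : ℕ) :
    ∏ i ∈ Finset.Icc 1 l, (o * (if φ i then v else p)) =
    o ^ l * (v ^ ((Finset.Icc 1 l).filter (fun i => φ i = true)).card *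
      p ^ (l - ((Finset.Icc 1 l).filter (fun i => φ i = true)).card)) := by
  have hcard : (Finset.Icc 1 l).card = l := by rw [Nat.card_Icc]; omega
  have hneg : ((Finset.Icc 1 l).filter (fun i => ¬ φ i = true)).card =
      l - ((Finset.Icc 1 l).filter (fun i => φ i = true)).card := by
    have := Finset.card_filter_add_card_filter_not
      (s := Finset.Icc 1 l) (p := fun i => φ i = true)
    omega
  rw [Finset.prod_mul_distrib, Finset.prod_const, hcard, Finset.prod_ite,
    Finset.prod_const, Finset.prod_const, hneg]

lemma count_DY (l : ℕ) :
    ((Finset.Icc 1 l).filter (fun i => φDY i = true)).card = (l + 1) / 2 := by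
  induction l with
  | zero => simp
  | succ n ih =>
    have hstep : Finset.Icc 1 (n + 1) = insert (n + 1) (Finset.Icc 1 n) := by
      ext x
      simp only [Finset.mem_Icc, Finset.mem_insert]
      omega
    rw [hstep, Finset.filter_insert]
    by_cases h : φDY (n + 1) = true
    · rw [if_pos h, Finset.card_insert_of_notMem (by simp), ih]
      have : (n + 1) % 2 = 1 := by
        simpa [φDY, decide_eq_true_eq] using h
      omega
    · rw [if_neg h, ih]
      have : ¬ (n + 1) % 2 = 1 := by
        simpa [φDY, decide_eq_true_eq] using h
      omega

theorem dynamic_interleaving_min_avg (o p v : ℝ) (h : ℕ)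
    (ho : 0 ≤ o) (hp0 : 0 ≤ p) (hp1 : p ≤ 1) (hv0 : 0 ≤ v) (hv1 : v ≤ 1)
    (φ : ℕ → Bool) :
    cost o h φDY p v + cost o h φDY v p ≤ cost o h φ p v + cost o h φ v p := by
  unfold cost
  rw [add_add_add_comm, add_add_add_comm 1 _ 1, ← Finset.sum_add_distrib,
    ← Finset.sum_add_distrib]
  gcongr 1 + 1 + ?_
  apply Finset.sum_le_sum
  intro l _
  rw [prod_eval o p v, prod_eval o v p, prod_eval o p v, prod_eval o v p, count_DY]
  set b := ((Finset.Icc 1 l).filter (fun i => φ i = true)).card with hb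
  have hbl : b ≤ l := by
    have := Finset.card_filter_le (Finset.Icc 1 l) (fun i => φ i = true)
    have hc : (Finset.Icc 1 l).card = l := by rw [Nat.card_Icc]; omega
    omega
  rw [← mul_add, ← mul_add]
  apply mul_le_mul_of_nonneg_left _ (pow_nonneg ho l)
  have key := sym_min p v hp0 hv0 (l - b) b
  have h1 : l - b + b = l := by omega
  rw [h1] at key
  have h2 : l - l / 2 = (l + 1) / 2 := by omega
  rw [h2] at key
  have h3 : l - (l + 1) / 2 = l / 2 := by omega
  rw [h3]
  calc v ^ ((l + 1) / 2) * p ^ (l / 2) + p ^ ((l + 1) / 2) * v ^ (l / 2)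
      = p ^ ((l + 1) / 2) * v ^ (l / 2) + p ^ (l / 2) * v ^ ((l + 1) / 2) := by ring
    _ ≤ p ^ (l - b) * v ^ b + p ^ b * v ^ (l - b) := key
    _ = v ^ b * p ^ (l - b) + p ^ b * v ^ (l - b) := by ring
end

section
/- Let Q be a finite set of selectivity pairs closed under swapping, i.e., (ς_P, ς_V) ∈ Q iff (ς_V, ς_P) ∈ Q. Then for every interleaving vector φ of length h, Σ_{(ς_P,ς_V) ∈ Q} C(o, h, φ_DY, ς_P, ς_V) ≤ Σ_{(ς_P,ς_V) ∈ Q} C(o, h, φ, ς_P, ς_V), where C(o, h, φ, ς_P, ς_V) = 1 + Σ_{l=1}^h Π_{i=1}^l (o · ς_{φ_i}) and φ_DY is the perfectly alternating vector. -/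
lemma step_ineq (x y : ℝ) (hx : 0 ≤ x) (hy : 0 ≤ y) (b c : ℕ) :
    x^(b+1)*y^(b+c+1) + x^(b+c+1)*y^(b+1) ≤ x^b*y^(b+c+2) + x^(b+c+2)*y^b := by
  have h1 : 0 ≤ (x^(c+1) - y^(c+1)) * (x - y) := by
    rcases le_total x y with hxy | hxy
    · nlinarith [pow_le_pow_left₀ hx hxy (c+1)]
    · nlinarith [pow_le_pow_left₀ hy hxy (c+1)]
  have h2 : 0 ≤ x^b * y^b * ((x^(c+1) - y^(c+1)) * (x - y)) :=
    mul_nonneg (mul_nonneg (pow_nonneg hx b) (pow_nonneg hy b)) h1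
  have hid : x^b*y^(b+c+2) + x^(b+c+2)*y^b - (x^(b+1)*y^(b+c+1) + x^(b+c+1)*y^(b+1))
      = x^b * y^b * ((x^(c+1) - y^(c+1)) * (x - y)) := by ring
  linarith

lemma bal (x y : ℝ) (hx : 0 ≤ x) (hy : 0 ≤ y) :
    ∀ d a b : ℕ, a - b ≤ d → b ≤ a →
      x^((a+b+1)/2)*y^((a+b)/2) + x^((a+b)/2)*y^((a+b+1)/2) ≤ x^a*y^b + x^b*y^a := by
  intro d
  induction d with
  | zero =>
    intro a b hd hba
    have : a = b := by omega
    subst this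
    have h1 : (a+a+1)/2 = a := by omega
    have h2 : (a+a)/2 = a := by omega
    rw [h1, h2]
  | succ n ih =>
    intro a b hd hba
    by_cases hc : a ≤ b + 1
    · have h1 : (a+b+1)/2 = a := by omega
      have h2 : (a+b)/2 = b := by omega
      rw [h1, h2]
    · obtain ⟨c, rfl⟩ : ∃ c, a = b + c + 2 := ⟨a - b - 2, by omega⟩
      have hih := ih (b+c+1) (b+1) (by omega) (by omega)
      have he1 : (b+c+1+(b+1)+1)/2 = (b+c+2+b+1)/2 := by omega
      have he2 : (b+c+1+(b+1))/2 = (b+c+2+b)/2 := by omega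
      rw [he1, he2] at hih
      have := step_ineq x y hx hy b c
      linarith

lemma prod_eq (o p v : ℝ) (φ : ℕ → Bool) (l : ℕ) :
    ∏ i ∈ Finset.Icc 1 l, (o * (if φ i then v else p))
      = o^l * (v ^ ((Finset.Icc 1 l).filter (fun i => φ i = true)).card
             * p ^ ((Finset.Icc 1 l).filter (fun i => ¬ φ i = true)).card) := by
  rw [Finset.prod_mul_distrib, Finset.prod_const, Nat.card_Icc, Finset.prod_ite,
    Finset.prod_const, Finset.prod_const]
  simp

lemma countOdd (l : ℕ) : ((Finset.Icc 1 l).filter (fun i => (i % 2 = 1))).card = (l+1)/2 := by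
  induction l with
  | zero => simp
  | succ n ih =>
    rw [← Finset.Ico_insert_right (show (1:ℕ) ≤ n+1 by omega), Finset.Ico_add_one_right_eq_Icc,
      Finset.filter_insert]
    by_cases hp : (n+1) % 2 = 1
    · rw [if_pos hp, Finset.card_insert_of_notMem (by simp), ih]
      omega
    · rw [if_neg hp, ih]
      omega

lemma countDY (l : ℕ) : ((Finset.Icc 1 l).filter (fun i => φDY i = true)).card = (l+1)/2 := by
  rw [← countOdd l]
  congr 1
  apply Finset.filter_congr
  intro i _
  simp [φDY]

lemma term_le (o p v : ℝ) (ho : 0 ≤ o) (hp : 0 ≤ p) (hv : 0 ≤ v)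
    (φ : ℕ → Bool) (l : ℕ) :
    (∏ i ∈ Finset.Icc 1 l, (o * (if φDY i then v else p)))
      + (∏ i ∈ Finset.Icc 1 l, (o * (if φDY i then p else v)))
    ≤ (∏ i ∈ Finset.Icc 1 l, (o * (if φ i then v else p)))
      + (∏ i ∈ Finset.Icc 1 l, (o * (if φ i then p else v))) := by
  rw [prod_eq, prod_eq, prod_eq, prod_eq]
  set A := ((Finset.Icc 1 l).filter (fun i => φ i = true)).card with hA
  set B := ((Finset.Icc 1 l).filter (fun i => ¬ φ i = true)).card with hB
  have hAB : A + B = l := by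
    rw [hA, hB, Finset.card_filter_add_card_filter_not, Nat.card_Icc]
    omega
  have hADY := countDY l
  have hBDY : ((Finset.Icc 1 l).filter (fun i => ¬ φDY i = true)).card = l/2 := by
    have := Finset.card_filter_add_card_filter_not
      (s := Finset.Icc 1 l) (p := fun i => φDY i = true)
    rw [countDY l, Nat.card_Icc] at this
    omega
  rw [hADY, hBDY]
  have hol : (0:ℝ) ≤ o^l := pow_nonneg ho l
  rcases le_total B A with hBA | hBA
  · have hbal := bal v p hv hp (A - B) A B le_rfl hBA
    have e1 : (A+B+1)/2 = (l+1)/2 := by omega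
    have e2 : (A+B)/2 = l/2 := by omega
    rw [e1, e2] at hbal
    nlinarith [mul_le_mul_of_nonneg_left hbal hol]
  · have hbal := bal p v hp hv (B - A) B A le_rfl hBA
    have e1 : (B+A+1)/2 = (l+1)/2 := by omega
    have e2 : (B+A)/2 = l/2 := by omega
    rw [e1, e2] at hbal
    nlinarith [mul_le_mul_of_nonneg_left hbal hol]

lemma pair_cost (o : ℝ) (h : ℕ) (ho : 0 ≤ o) (p v : ℝ) (hp : 0 ≤ p) (hv : 0 ≤ v)
    (φ : ℕ → Bool) :
    cost o h φDY p v + cost o h φDY v p ≤ cost o h φ p v + cost o h φ v p := by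
  have key := Finset.sum_le_sum (s := Finset.Icc 1 h)
    (f := fun l => (∏ i ∈ Finset.Icc 1 l, (o * (if φDY i then v else p)))
      + (∏ i ∈ Finset.Icc 1 l, (o * (if φDY i then p else v))))
    (g := fun l => (∏ i ∈ Finset.Icc 1 l, (o * (if φ i then v else p)))
      + (∏ i ∈ Finset.Icc 1 l, (o * (if φ i then p else v))))
    (fun l _ => term_le o p v ho hp hv φ l)
  rw [Finset.sum_add_distrib, Finset.sum_add_distrib] at key
  unfold cost
  linarith

theorem dynamic_interleaving_min_total (Q : Finset (ℝ × ℝ)) (o : ℝ) (h : ℕ)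
    (ho : 0 ≤ o)
    (hswap : ∀ p v : ℝ, (p, v) ∈ Q ↔ (v, p) ∈ Q)
    (hsel : ∀ q ∈ Q, 0 ≤ q.1 ∧ q.1 ≤ 1 ∧ 0 ≤ q.2 ∧ q.2 ≤ 1)
    (φ : ℕ → Bool) :
    ∑ q ∈ Q, cost o h φDY q.1 q.2 ≤ ∑ q ∈ Q, cost o h φ q.1 q.2 := by
  have hswapsum : ∀ ψ : ℕ → Bool,
      ∑ q ∈ Q, cost o h ψ q.1 q.2 = ∑ q ∈ Q, cost o h ψ q.2 q.1 := by
    intro ψ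
    apply Finset.sum_nbij' (i := Prod.swap) (j := Prod.swap)
    · intro a ha
      exact (hswap a.1 a.2).mp ha
    · intro a ha
      exact (hswap a.1 a.2).mp ha
    · intro a _; simp
    · intro a _; simp
    · intro a _; simp
  have key := Finset.sum_le_sum (s := Q)
    (f := fun q : ℝ × ℝ => cost o h φDY q.1 q.2 + cost o h φDY q.2 q.1)
    (g := fun q : ℝ × ℝ => cost o h φ q.1 q.2 + cost o h φ q.2 q.1)
    (fun q hq => pair_cost o h ho q.1 q.2 (hsel q hq).1 (hsel q hq).2.2.1 φ)
  rw [Finset.sum_add_distrib, Finset.sum_add_distrib, ← hswapsum φDY, ← hswapsum φ] at key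
  linarith
end

section
/- Let ψ(K, D) = {K₁, …, K_m} be the partition of a finite set K of prefix-free byte strings by their value at the discriminative byte dsc(K, D) = |lcp(K, D)| + 1, where lcp is the longest common prefix. Then ψ is prefix-preserving: for all i ≠ j, |lcp(K_i, D)| > |lcp(K_i ∪ K_j, D)| and |lcp(K, D)| = |lcp(K_i ∪ K_j, D)|. -/
/-- `s` is a longest common prefix of the finite set of byte strings `K`. -/
def IsLCP (K : Finset (List ℕ)) (s : List ℕ) : Prop :=
  (∀ k ∈ K, s <+: k) ∧ ∀ t : List ℕ, (∀ k ∈ K, t <+: k) → t.length ≤ s.length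

/-- `ψ`-partitioning is prefix-preserving: keys in the same part have a longer common
prefix than keys from two different parts, and the common prefix across two different
parts has the same length as that of the whole set `K`. -/
theorem psi_prefix_preserving (K : Finset (List ℕ)) (s : List ℕ)
    (hs : IsLCP K s)
    (hpf : ∀ k ∈ K, ∀ k' ∈ K, k ≠ k' → ¬ k <+: k')
    (P : Finset (Finset (List ℕ)))
    (hne : ∀ p ∈ P, p.Nonempty)
    (hsub : ∀ p ∈ P, ∀ k ∈ p, k ∈ K)
    (hcover : ∀ k ∈ K, ∃ p ∈ P, k ∈ p)
    (hcorrect : ∀ p ∈ P, ∀ k ∈ p, ∀ k' ∈ p, k.getD s.length 0 = k'.getD s.length 0)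
    (hdisj : ∀ p ∈ P, ∀ q ∈ P, p ≠ q → ∀ k ∈ p, ∀ k' ∈ q,
      k.getD s.length 0 ≠ k'.getD s.length 0) :
    ∀ p ∈ P, ∀ q ∈ P, p ≠ q → ∀ sp spq : List ℕ,
      IsLCP p sp → IsLCP (p ∪ q) spq →
      spq.length < sp.length ∧ s.length = spq.length := by
  intro p hp q hq hpq sp spq hsp hspq
  obtain ⟨k₀, hk₀⟩ := hne p hp
  obtain ⟨k₁, hk₁⟩ := hne q hq
  have hk0K : k₀ ∈ K := hsub p hp k₀ hk₀
  have hk1K : k₁ ∈ K := hsub q hq k₁ hk₁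
  have hdiff : k₀.getD s.length 0 ≠ k₁.getD s.length 0 :=
    hdisj p hp q hq hpq k₀ hk₀ k₁ hk₁
  have hk01 : k₀ ≠ k₁ := by rintro rfl; exact hdiff rfl
  -- every key in K is strictly longer than s
  have hlong : ∀ k ∈ K, s.length < k.length := by
    intro k hk
    rcases lt_or_eq_of_le ((hs.1 k hk).length_le) with h | h
    · exact h
    · exfalso
      have hks : k = s := ((hs.1 k hk).eq_of_length h).symm
      by_cases hk0 : k = k₀
      · exact hpf k hk k₁ hk1K (hk0 ▸ hk01) (hks ▸ hs.1 k₁ hk1K)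
      · exact hpf k hk k₀ hk0K hk0 (hks ▸ hs.1 k₀ hk0K)
  -- s is a common prefix of p ∪ q
  have hscommon : ∀ k ∈ p ∪ q, s <+: k := by
    intro k hk
    rcases Finset.mem_union.1 hk with h | h
    · exact hs.1 k (hsub p hp k h)
    · exact hs.1 k (hsub q hq k h)
  have h1 : s.length ≤ spq.length := hspq.2 s hscommon
  -- spq.length ≤ s.length
  have h2 : spq.length ≤ s.length := by
    by_contra h
    push_neg at h
    have hpk0 : spq <+: k₀ := hspq.1 k₀ (Finset.mem_union.2 (Or.inl hk₀))
    have hpk1 : spq <+: k₁ := hspq.1 k₁ (Finset.mem_union.2 (Or.inr hk₁))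
    have e0 : k₀.getD s.length 0 = spq.getD s.length 0 := by
      rw [List.getD_eq_getElem k₀ 0 (lt_of_lt_of_le h hpk0.length_le),
        List.getD_eq_getElem spq 0 h]
      exact (hpk0.getElem h).symm
    have e1 : k₁.getD s.length 0 = spq.getD s.length 0 := by
      rw [List.getD_eq_getElem k₁ 0 (lt_of_lt_of_le h hpk1.length_le),
        List.getD_eq_getElem spq 0 h]
      exact (hpk1.getElem h).symm
    exact hdiff (e0.trans e1.symm)
  have hse : s.length = spq.length := le_antisymm h1 h2
  -- s ++ [common byte] is a common prefix of p
  refine ⟨?_, hse⟩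
  have hext : ∀ k ∈ p, s ++ [k₀.getD s.length 0] <+: k := by
    intro k hk
    have hkK : k ∈ K := hsub p hp k hk
    obtain ⟨r, hr⟩ := hs.1 k hkK
    have hrne : r ≠ [] := by
      rintro rfl
      simp only [List.append_nil] at hr
      exact absurd (hr ▸ hlong k hkK) (lt_irrefl _)
    have hc : k₀.getD s.length 0 = k.getD s.length 0 :=
      hcorrect p hp k₀ hk₀ k hk
    have hget : k.getD s.length 0 = r.getD 0 0 := by
      rw [← hr]
      rcases r with _ | ⟨a, r⟩
      · exact absurd rfl hrne
      · rw [List.getD_eq_getElem?_getD, List.getElem?_append_right (le_refl s.length)]; simp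
    rw [hc, hget, ← hr]
    apply List.prefix_append_right_inj s |>.2
    rcases r with _ | ⟨a, r⟩
    · exact absurd rfl hrne
    · simp
  have := hsp.2 (s ++ [k₀.getD s.length 0]) hext
  simp only [List.length_append, List.length_singleton] at this
  omega
end
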